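/- arXiv:2502.00269 — 3 statements merged into one kernel-verified Lean document; each statement's English description precedes it below -/
import Mathlib

section
/- Abel's multinomial identity, second special instance: for every m ≥ 1, every n ≥ 0, and all positive reals x_1,…,x_m, one has A_n(x_1,…,x_m; −1,…,−1,0) = (x_1⋯x_m)^{-1}·x_m·(x_1+⋯+x_m+n)^{n}, i.e. Σ_{(s_1,…,s_m): s_1+⋯+s_m=n} (n!/(s_1!⋯s_m!))·(∏_{j=1}^{m-1} (x_j+s_j)^{s_j-1})·(x_m+s_m)^{s_m} = (x_1⋯x_{m-1})^{-1}·(x_1+⋯+x_m+n)^{n}. -/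
/-- The Abel sum `A_n(x_1,…,x_m; p_1,…,p_m)`: the sum over tuples `s` of nonnegative
integers with `s_1 + ⋯ + s_m = n` of the multinomial coefficient `n!/(s_1!⋯s_m!)`
times `∏_j (x_j + s_j)^(s_j + p_j)`, powers taken in `ℝ` (`zpow`). -/
noncomputable def abelA (m n : ℕ) (x : Fin m → ℝ) (p : Fin m → ℤ) : ℝ :=
  ∑ s ∈ Finset.Nat.antidiagonalTuple m n,
    (Nat.multinomial Finset.univ s : ℝ) * ∏ j, (x j + s j) ^ ((s j : ℤ) + p j)

/-!
Peeling off the first variable writes `A_n` in `m + 2` variables as a binomial convolution of the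
first factor with `A_{n-k}` in the remaining `m + 1` variables, and with the induction hypothesis
this convolution is exactly Abel's binomial identity
`∑ₖ C(n,k) x (x+k)^(k-1) (y+n-k)^(n-k) = (x+y+n)^n` (for `x ≠ 0`).
That identity is proved by induction on `n`: as a function of `y`, the difference of its two sides
at `n + 1` has derivative `n + 1` times the difference at `n` evaluated at `y + 1`, so it is
constant; at `y = -(x+n+1)` it vanishes, since the left side becomes `x` times the
`(n+1)`-st forward difference of `t ↦ tⁿ`.
-/

open Finset

noncomputable def abelBinomialSum (x y : ℝ) (n : ℕ) : ℝ :=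
  ∑ k ∈ range (n + 1),
    n.choose k * (x * (x + k) ^ ((k : ℤ) - 1)) * (y + (n - k : ℕ)) ^ (n - k)

lemma hasDerivAt_abelBinomialSum_succ (x y : ℝ) (n : ℕ) :
    HasDerivAt (fun y => abelBinomialSum x y (n + 1))
      ((n + 1) * abelBinomialSum x (y + 1) n) y := by
  set c : ℕ → ℝ := fun k => (n + 1).choose k * (x * (x + k) ^ ((k : ℤ) - 1))
  have hterm : ∀ k ∈ range (n + 2),
      HasDerivAt (fun y => c k * (y + (n + 1 - k : ℕ)) ^ (n + 1 - k))
        (c k * ((n + 1 - k : ℕ) * (y + (n + 1 - k : ℕ)) ^ (n + 1 - k - 1))) y := fun k _ => by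
    simpa using (((hasDerivAt_id y).add_const _).pow (n + 1 - k)).const_mul (c k)
  refine (HasDerivAt.fun_sum hterm).congr_deriv ?_
  rw [sum_range_succ, Nat.sub_self, Nat.cast_zero, zero_mul, mul_zero, add_zero,
    abelBinomialSum, mul_sum]
  refine sum_congr rfl fun k hk => ?_
  have hsub : n + 1 - k = n - k + 1 := by
    have := mem_range.mp hk
    omega
  have hchoose : ((n + 1).choose k : ℝ) * (n - k + 1 : ℕ) = (n + 1) * n.choose k := by
    rw [← hsub]
    exact_mod_cast (Nat.choose_mul_succ_eq n k).symm.trans (mul_comm _ _)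
  rw [hsub, Nat.add_sub_cancel]
  push_cast at hchoose ⊢
  linear_combination
    (x * (x + k) ^ ((k : ℤ) - 1) * (y + 1 + (n - k : ℕ)) ^ (n - k)) * hchoose

lemma mul_add_zpow_sub_one_mul_pow {K : Type*} [Field K] (x : K) {k n : ℕ} (hk : k ≤ n + 1) :
    x * (x + k) ^ ((k : ℤ) - 1) * (x + k) ^ (n + 1 - k) = x * (x + k) ^ n := by
  rcases k with _ | j
  · simp only [Nat.cast_zero, add_zero, zero_sub, zpow_neg_one, Nat.sub_zero, pow_succ]
    rcases eq_or_ne x 0 with rfl | hx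
    · simp
    · field_simp
  · rw [show ((j + 1 : ℕ) : ℤ) - 1 = (j : ℕ) by push_cast; ring, zpow_natCast, mul_assoc,
      ← pow_add]
    congr 2
    omega

lemma abelBinomialSum_succ_neg_eq_zero (x : ℝ) (n : ℕ) :
    abelBinomialSum x (-(x + (n + 1))) (n + 1) = 0 := by
  have hΔ := congrFun (fwdDiff_iter_pow_eq_zero_of_lt (R := ℝ) (Nat.lt_succ_self n)) x
  rw [fwdDiff_iter_eq_sum_shift] at hΔ
  calc abelBinomialSum x (-(x + (n + 1))) (n + 1)
      = x * ∑ k ∈ range (n + 2),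
          ((-1 : ℤ) ^ (n + 1 - k) * (n + 1).choose k) • (x + k • (1 : ℝ)) ^ n := by
        rw [abelBinomialSum, mul_sum]
        refine sum_congr rfl fun k hk => ?_
        have hk : k ≤ n + 1 := Nat.lt_succ_iff.mp (mem_range.mp hk)
        have hbase : -(x + (n + 1)) + (n + 1 - k : ℕ) = -(x + k) := by
          push_cast [hk]
          ring
        rw [hbase, neg_pow, zsmul_eq_mul, nsmul_eq_mul, mul_one]
        push_cast
        linear_combination
          ((-1) ^ (n + 1 - k) * ((n + 1).choose k : ℝ)) * mul_add_zpow_sub_one_mul_pow x hk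
    _ = 0 := by rw [hΔ, Pi.zero_apply, mul_zero]

theorem abelBinomialSum_eq_pow {x : ℝ} (hx : x ≠ 0) (n : ℕ) (y : ℝ) :
    abelBinomialSum x y n = (x + y + n) ^ n := by
  induction n generalizing y with
  | zero => simp [abelBinomialSum, hx]
  | succ n ih =>
    set f : ℝ → ℝ := fun y => abelBinomialSum x y (n + 1) - (x + y + (n + 1 : ℕ)) ^ (n + 1)
    have hf : ∀ y, HasDerivAt f 0 y := fun y => by
      have hpow : HasDerivAt (fun y => (x + y + (n + 1 : ℕ)) ^ (n + 1))
          ((n + 1 : ℕ) * (x + y + (n + 1 : ℕ)) ^ n) y := by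
        simpa using
          (((hasDerivAt_id y).const_add x).add_const ((n + 1 : ℕ) : ℝ)).fun_pow (n + 1)
      refine ((hasDerivAt_abelBinomialSum_succ x y n).sub hpow).congr_deriv ?_
      rw [ih]
      push_cast
      ring
    have hconst := is_const_of_deriv_eq_zero (fun y => (hf y).differentiableAt)
      fun y => (hf y).deriv
    have hfy := hconst y (-(x + (n + 1)))
    simp only [f, abelBinomialSum_succ_neg_eq_zero] at hfy
    push_cast at hfy ⊢
    linear_combination hfy

lemma Multiset.Nat.antidiagonalTuple_succ (m n : ℕ) :
    Multiset.Nat.antidiagonalTuple (m + 1) n =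
      (Multiset.Nat.antidiagonal n).bind fun p =>
        (Multiset.Nat.antidiagonalTuple m p.2).map (Fin.cons p.1) := by
  simp [Multiset.Nat.antidiagonalTuple, List.Nat.antidiagonalTuple, Multiset.Nat.antidiagonal]

lemma Finset.Nat.sum_antidiagonalTuple_succ {M : Type*} [AddCommMonoid M] (m n : ℕ)
    (f : (Fin (m + 1) → ℕ) → M) :
    ∑ s ∈ Nat.antidiagonalTuple (m + 1) n, f s =
      ∑ p ∈ antidiagonal n, ∑ t ∈ Nat.antidiagonalTuple m p.2, f (Fin.cons p.1 t) := by
  change (Multiset.map f (Multiset.Nat.antidiagonalTuple (m + 1) n)).sum = _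
  rw [Multiset.Nat.antidiagonalTuple_succ, Multiset.map_bind, Multiset.sum_bind]
  simp only [Multiset.map_map, Function.comp_def]
  rfl

lemma Nat.multinomial_univ_fin_cons {m : ℕ} (k : ℕ) (t : Fin m → ℕ) :
    Nat.multinomial univ (Fin.cons k t : Fin (m + 1) → ℕ) =
      (k + ∑ i, t i).choose k * Nat.multinomial univ t := by
  rw [Fin.univ_succ, Nat.multinomial_cons]
  simp [Nat.multinomial, sum_map, prod_map]

lemma abelA_succ (m n : ℕ) (x : Fin (m + 1) → ℝ) (p : Fin (m + 1) → ℤ) :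
    abelA (m + 1) n x p = ∑ k ∈ range (n + 1),
      n.choose k * (x 0 + k) ^ ((k : ℤ) + p 0) * abelA m (n - k) (Fin.tail x) (Fin.tail p) := by
  rw [abelA, Finset.Nat.sum_antidiagonalTuple_succ, Nat.sum_antidiagonal_eq_sum_range_succ_mk]
  refine sum_congr rfl fun k hk => ?_
  rw [abelA, mul_sum]
  refine sum_congr rfl fun t ht => ?_
  rw [Finset.Nat.mem_antidiagonalTuple] at ht
  rw [Nat.multinomial_univ_fin_cons, ht, Nat.add_sub_of_le (Nat.lt_succ_iff.mp (mem_range.mp hk)),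
    Fin.prod_univ_succ]
  simp only [Fin.cons_zero, Fin.cons_succ, Fin.tail]
  push_cast
  ring

/-- Abel's multinomial identity, second special instance (stated with `m + 1 ≥ 1`
variables, the last one carrying exponent offset `0` and all the others `−1`):
`A_n(x_1,…,x_m; −1,…,−1,0) = (x_1⋯x_m)⁻¹·x_m·(x_1+⋯+x_m+n)^n`. -/
theorem abel_multinomial_special_two (m n : ℕ)
    (x : Fin (m + 1) → ℝ) (hx : ∀ j, 0 < x j) :
    abelA (m + 1) n x (fun j => if j = Fin.last m then 0 else -1) =
      (∏ j, x j)⁻¹ * x (Fin.last m) * ((∑ j, x j) + n) ^ n := by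
  induction m generalizing n with
  | zero => simp [abelA, (hx 0).ne']
  | succ m ih =>
    have htail : Fin.tail (fun j : Fin (m + 2) => if j = Fin.last (m + 1) then (0 : ℤ) else -1) =
        fun j => if j = Fin.last m then 0 else -1 := by
      ext j
      simp [Fin.tail, ← Fin.succ_last]
    rw [abelA_succ, htail]
    simp_rw [ih _ (Fin.tail x) fun j => hx j.succ]
    rw [Fin.prod_univ_succ x, Fin.sum_univ_succ x, ← Fin.succ_last,
      if_neg (Fin.succ_ne_zero _).symm, ← abelBinomialSum_eq_pow (hx 0).ne', abelBinomialSum,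
      mul_sum]
    refine sum_congr rfl fun k _ => ?_
    simp only [Fin.tail, ← sub_eq_add_neg]
    field_simp [(hx 0).ne']
end

section
/- For all integers 1 ≤ m ≤ n, the following identity holds in ℝ: Σ_{s=0}^{m-1} s·C(m-1,s)·(n-s)^{m-s-2}·(s+1)^{s-1} = (m-1)·(n+1)^{m-2}/(n-m+1). -/
/-!
With `s = k + 1`, `N = m - 2` and `y = n - m + 1 > 0` the sum is `(N + 1) / y` times Abel's sum
`∑_{k ≤ N} C(N,k) (x+k)^k · y (y+N-k)^(N-k-1)` at `x = 2`, and Abel's identity evaluates the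
latter to `(x + y + N)^N = (n + 1)^(m-2)`.

Abel's identity is proved by induction on `N`. Differentiating in `x` turns the sum for `N + 1`
at `x` into `N + 1` times the sum for `N` at `x + 1`, exactly as for `(x + y + N + 1)^(N + 1)`;
so the two sides differ by a constant. At `x = -(y + N + 1)` every `(x + k)^k` equals
`(-1)^k (y + N + 1 - k)^k`, and the sum collapses to `y` times an `(N + 1)`-st finite difference
of the degree-`N` polynomial `t ↦ t^N`, which vanishes.
-/

open Finset

theorem sum_range_neg_one_pow_mul_choose_mul_sub_pow_eq_zero {R : Type*} [CommRing R]
    {d n : ℕ} (hdn : d < n) (a : R) :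
    ∑ k ∈ range (n + 1), (-1) ^ k * (n.choose k : R) * (a - k) ^ d = 0 := by
  have h := congrFun (fwdDiff_iter_pow_eq_zero_of_lt (R := R) hdn) (-a)
  rw [fwdDiff_iter_eq_sum_shift] at h
  have hsign : ∀ k ∈ range (n + 1), (-1) ^ k * (n.choose k : R) * (a - k) ^ d
      = (-1) ^ (n + d) * (((-1 : ℤ) ^ (n - k) * n.choose k) • (-a + k • (1 : R)) ^ d) := by
    intro k hk
    obtain ⟨j, rfl⟩ := Nat.exists_eq_add_of_le (Nat.lt_succ_iff.mp (mem_range.mp hk))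
    have hneg_one_sq : (-1 : R) ^ j * (-1) ^ j = 1 := by rw [← pow_add, ← two_mul, pow_mul]; simp
    rw [Nat.add_sub_cancel_left, zsmul_eq_mul, nsmul_one, show a - k = (-1) * (-a + k) by ring,
      mul_pow]
    push_cast
    linear_combination (-((k + j).choose k : R) * (-1) ^ k * (-1) ^ d * (-a + k) ^ d) * hneg_one_sq
  rw [sum_congr rfl hsign, ← mul_sum, h, Pi.zero_apply, mul_zero]

noncomputable def abelSum (N : ℕ) (x y : ℝ) : ℝ :=
  ∑ k ∈ range (N + 1), N.choose k * (x + k) ^ k * (y * (y + N - k) ^ ((N : ℤ) - k - 1))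

theorem hasDerivAt_abelSum (N : ℕ) (x y : ℝ) :
    HasDerivAt (abelSum (N + 1) · y) ((N + 1) * abelSum N (x + 1) y) x := by
  have hterm : ∀ k ∈ range (N + 2), HasDerivAt
      (fun x ↦ (N + 1).choose k * (x + k) ^ k
        * (y * (y + (N + 1 : ℕ) - k) ^ ((N + 1 : ℕ) - k - 1 : ℤ)))
      ((N + 1).choose k * (k * (x + k) ^ (k - 1) * 1)
        * (y * (y + (N + 1 : ℕ) - k) ^ ((N + 1 : ℕ) - k - 1 : ℤ))) x :=
    fun k _ ↦ (((hasDerivAt_id x).add_const _).pow k).const_mul _ |>.mul_const _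
  refine (HasDerivAt.fun_sum hterm).congr_deriv ?_
  rw [sum_range_succ', abelSum, mul_sum]
  simp only [CharP.cast_eq_zero, zero_mul, mul_zero, add_zero]
  refine sum_congr rfl fun i _ ↦ ?_
  have hc : ((N + 1) * N.choose i : ℝ) = (N + 1).choose (i + 1) * (i + 1) := by
    exact_mod_cast Nat.add_one_mul_choose_eq N i
  rw [Nat.add_sub_cancel]
  push_cast
  rw [show (N : ℤ) + 1 - (i + 1) - 1 = N - i - 1 by ring,
    show y + (N + 1) - (i + 1) = y + N - i by ring, show x + (i + 1) = x + 1 + i by ring]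
  linear_combination (-(x + 1 + i) ^ i * (y * (y + N - i) ^ ((N : ℤ) - i - 1))) * hc

theorem abelSum_succ_neg_eq_zero (N : ℕ) {y : ℝ} (hy : 0 < y) :
    abelSum (N + 1) (-(y + (N + 1 : ℕ))) y = 0 := by
  have hterm : ∀ k ∈ range (N + 2),
      (N + 1).choose k * (-(y + (N + 1 : ℕ)) + k) ^ k
          * (y * (y + (N + 1 : ℕ) - k) ^ ((N + 1 : ℕ) - k - 1 : ℤ))
        = y * ((-1) ^ k * (N + 1).choose k * (y + (N + 1 : ℕ) - k) ^ N) := by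
    intro k hk
    have hk' : (k : ℝ) ≤ (N + 1 : ℕ) := by exact_mod_cast Nat.lt_succ_iff.mp (mem_range.mp hk)
    have hb : y + (N + 1 : ℕ) - k ≠ 0 := by linarith
    have hpow : (y + (N + 1 : ℕ) - k) ^ k * (y + (N + 1 : ℕ) - k) ^ ((N + 1 : ℕ) - k - 1 : ℤ)
        = (y + (N + 1 : ℕ) - k) ^ N := by
      rw [← zpow_natCast, ← zpow_add₀ hb, ← zpow_natCast]
      push_cast
      ring_nf
    rw [show -(y + (N + 1 : ℕ)) + k = (-1) * (y + (N + 1 : ℕ) - k) by ring, mul_pow]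
    linear_combination (y * (-1) ^ k * (N + 1).choose k) * hpow
  rw [abelSum, sum_congr rfl hterm, ← mul_sum,
    sum_range_neg_one_pow_mul_choose_mul_sub_pow_eq_zero (Nat.lt_succ_self N), mul_zero]

theorem abelSum_eq (N : ℕ) {y : ℝ} (hy : 0 < y) (x : ℝ) : abelSum N x y = (x + y + N) ^ N := by
  induction N generalizing x with
  | zero => simp [abelSum, hy.ne']
  | succ N ih =>
    have hderiv : ∀ x, HasDerivAt
        (fun x ↦ abelSum (N + 1) x y - (x + (y + (N + 1 : ℕ))) ^ (N + 1)) 0 x := by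
      intro x
      refine ((hasDerivAt_abelSum N x y).fun_sub
        (((hasDerivAt_id' x).add_const _).fun_pow (N + 1))).congr_deriv ?_
      rw [ih]
      push_cast
      ring
    have hconst := is_const_of_deriv_eq_zero (fun x ↦ (hderiv x).differentiableAt)
      (fun x ↦ (hderiv x).deriv) x (-(y + (N + 1 : ℕ)))
    rw [abelSum_succ_neg_eq_zero N hy, neg_add_cancel, zero_pow N.succ_ne_zero, sub_zero,
      sub_eq_zero] at hconst
    rw [hconst]
    push_cast
    ring

theorem sum_range_mul_choose_mul_zpow_eq (N : ℕ) {y : ℝ} (hy : 0 < y) :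
    ∑ s ∈ range (N + 2), (s : ℝ) * (N + 1).choose s * (y + N + 1 - s) ^ ((N : ℤ) - s)
        * ((s : ℝ) + 1) ^ ((s : ℤ) - 1) = (N + 1) * (y + N + 2) ^ N / y := by
  have hterm : ∀ k ∈ range (N + 1),
      ((k + 1 : ℕ) : ℝ) * (N + 1).choose (k + 1)
          * (y + N + 1 - (k + 1 : ℕ)) ^ ((N : ℤ) - (k + 1 : ℕ))
          * (((k + 1 : ℕ) : ℝ) + 1) ^ (((k + 1 : ℕ) : ℤ) - 1)
        = (N + 1) / y * (N.choose k * (2 + k) ^ k * (y * (y + N - k) ^ ((N : ℤ) - k - 1))) := by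
    intro k _
    have hc : ((k + 1) * (N + 1).choose (k + 1) : ℝ) = (N + 1) * N.choose k := by
      exact_mod_cast (by rw [Nat.add_one_mul_choose_eq]; ring :
        (k + 1) * (N + 1).choose (k + 1) = (N + 1) * N.choose k)
    rw [← zpow_natCast (2 + (k : ℝ)), div_mul_eq_mul_div, eq_div_iff hy.ne']
    push_cast
    rw [show (N : ℤ) - (k + 1) = N - k - 1 by ring, show (k : ℤ) + 1 - 1 = k by ring,
      show y + N + 1 - (k + 1) = y + N - k by ring, show (k : ℝ) + 1 + 1 = 2 + k by ring]
    linear_combination (2 + (k : ℝ)) ^ (k : ℤ) * (y + N - k) ^ ((N : ℤ) - k - 1) * y * hc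
  rw [sum_range_succ', sum_congr rfl hterm, ← mul_sum, ← abelSum.eq_1, abelSum_eq N hy]
  push_cast
  ring

/-- For `1 ≤ m ≤ n`, in `ℝ` (powers with possibly negative integer exponents are `zpow`):
`Σ_{s=0}^{m-1} s·C(m-1,s)·(n-s)^(m-s-2)·(s+1)^(s-1) = (m-1)·(n+1)^(m-2)/(n-m+1)`. -/
theorem abel_sum_weighted (m n : ℕ) (hm : 1 ≤ m) (hmn : m ≤ n) :
    (∑ s ∈ Finset.range m,
        (s : ℝ) * ((m - 1).choose s : ℝ) * ((n : ℝ) - s) ^ ((m : ℤ) - s - 2)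
          * ((s : ℝ) + 1) ^ ((s : ℤ) - 1))
      = ((m : ℝ) - 1) * ((n : ℝ) + 1) ^ ((m : ℤ) - 2) / ((n : ℝ) - m + 1) := by
  obtain rfl | ⟨N, rfl⟩ : m = 1 ∨ ∃ N, m = N + 2 := by
    rcases m with _ | _ | N <;> simp_all
  · norm_num
  have hy : (0 : ℝ) < n - N - 1 := by
    have : ((N + 2 : ℕ) : ℝ) ≤ n := by exact_mod_cast hmn
    push_cast at this
    linarith
  have habel := sum_range_mul_choose_mul_zpow_eq N hy
  rw [show (n : ℝ) - N - 1 + N + 1 = n by ring,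
    show (n : ℝ) - N - 1 + N + 2 = n + 1 by ring] at habel
  push_cast
  simp_rw [show ∀ s : ℤ, (N : ℤ) + 2 - s - 2 = N - s from fun s ↦ by ring]
  rw [show (N : ℤ) + 2 - 2 = N by ring, zpow_natCast, show (N : ℝ) + 2 - 1 = N + 1 by ring,
    show (n : ℝ) - (N + 2) + 1 = n - N - 1 by ring, habel]
end

section
/- Upper bound on the total variation distance: for all integers 1 ≤ m ≤ n and every real p ∈ [0,1], ‖Q_{m,n,p} − Uni_n‖_TV ≤ (m−1)/((n+1)(n−m+1)). -/
/-- `T m n s = C(m-1,s)·(n-s)^(m-s-2)·(s+1)^(s-1)` in `ℝ`, with integer (possibly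
negative) exponents interpreted via `zpow`. -/
noncomputable def T (m n s : ℕ) : ℝ :=
  ((m - 1).choose s : ℝ) * ((n : ℝ) - s) ^ ((m : ℤ) - s - 2) * ((s : ℝ) + 1) ^ ((s : ℤ) - 1)

/-- `Q m n p j` is the conditional probability that the last of `m` cars prefers spot
`j ∈ {1,…,n}` given that all cars park, in the probabilistic parking model on `n` spots
with forward-probability `p` (Theorem 3 of Durmić–Han–Harris–Ribeiro–Yin):
`Q_{m,n,p}(j) = (n-m+2)/((n-m+1)(n+1)) − (1/(n+1)^(m-1))·
  [ p·Σ_{s=n-j+1}^{m-1} T(s) + (1-p)·Σ_{s=j}^{m-1} T(s) ]`. -/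
noncomputable def Q (m n : ℕ) (p : ℝ) (j : ℕ) : ℝ :=
  ((n : ℝ) - m + 2) / (((n : ℝ) - m + 1) * ((n : ℝ) + 1)) -
    1 / ((n : ℝ) + 1) ^ (m - 1) *
      (p * ∑ s ∈ Finset.Icc (n - j + 1) (m - 1), T m n s +
        (1 - p) * ∑ s ∈ Finset.Icc j (m - 1), T m n s)

/-- Total variation distance between `Q m n p` and the uniform distribution on `{1,…,n}`:
`(1/2)·Σ_{j=1}^n |Q_{m,n,p}(j) − 1/n|`. -/
noncomputable def tvUni (m n : ℕ) (p : ℝ) : ℝ :=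
  1 / 2 * ∑ j ∈ Finset.Icc 1 n, |Q m n p j - 1 / (n : ℝ)|

/-!
Write `Q(j) - 1/n = c - E j` with `c = (m-1)/(n(n+1)(n-m+1))` and `E j ≥ 0`. Since `Q` sums to
`1`, `∑ |Q(j) - 1/n| = 2 ∑ (Q(j) - 1/n)⁺ ≤ 2nc`, which is the bound. After exchanging the sums
over `j` and `s`, `∑ Q = 1` amounts to `(n-m+1)(n+1) ∑ s·T(s) = (m-1)(n+1)^(m-1)`, which is Abel's
identity `∑ C(N,k) x(x+k)^(k-1) (y+N-k)^(N-k) = (x+y+N)^N` at `x = n-m+1`, `y = 2`, `N = m-2`.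
-/

open Finset Finset.Nat

section Abel

variable {R : Type*} [CommRing R]

def abelPoly (x : R) : ℕ → R
  | 0 => 1
  | k + 1 => x * (x + k + 1) ^ k

@[simp] lemma abelPoly_zero (x : R) : abelPoly x 0 = 1 := rfl

lemma abelPoly_succ (x : R) (k : ℕ) : abelPoly x (k + 1) = x * (x + k + 1) ^ k := rfl

lemma sum_antidiagonal_choose_snd_mul (n : ℕ) (f : ℕ × ℕ → R) :
    ∑ p ∈ antidiagonal n, (n.choose p.2 : R) * f p =
      ∑ p ∈ antidiagonal n, (n.choose p.1 : R) * f p :=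
  sum_congr rfl fun p hp => by rw [Nat.choose_symm_of_eq_add (mem_antidiagonal.1 hp).symm]

/-- Abel polynomials are of binomial type; the case `n + 1` needs Abel's identity at `n`. -/
lemma abelPoly_add_succ {n : ℕ}
    (habel : ∀ x y : R, (x + y + n) ^ n =
      ∑ p ∈ antidiagonal n, n.choose p.1 * abelPoly x p.1 * (y + p.2) ^ p.2) (x y : R) :
    abelPoly (x + y) (n + 1) =
      ∑ p ∈ antidiagonal (n + 1), (n + 1).choose p.1 * (abelPoly x p.1 * abelPoly y p.2) := by
  have h₁ : ∑ p ∈ antidiagonal n, n.choose p.1 * (abelPoly x p.1 * abelPoly y (p.2 + 1)) =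
      y * (x + (y + 1) + n) ^ n := by
    rw [habel, mul_sum]
    refine sum_congr rfl fun p _ => ?_
    rw [abelPoly_succ]
    ring
  have h₂ : ∑ p ∈ antidiagonal n, n.choose p.2 * (abelPoly x (p.1 + 1) * abelPoly y p.2) =
      x * (y + (x + 1) + n) ^ n := by
    rw [habel, mul_sum, ← sum_antidiagonal_swap]
    refine sum_congr rfl fun p _ => ?_
    rw [Prod.fst_swap, Prod.snd_swap, abelPoly_succ]
    ring
  rw [sum_antidiagonal_choose_succ_mul (fun i j => abelPoly x i * abelPoly y j), h₁, h₂,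
    abelPoly_succ]
  ring

theorem abel_identity (n : ℕ) (x y : R) :
    (x + y + n) ^ n = ∑ p ∈ antidiagonal n, n.choose p.1 * abelPoly x p.1 * (y + p.2) ^ p.2 := by
  induction n generalizing x y with
  | zero => simp
  | succ n ih =>
    have hB := abelPoly_add_succ ih x y
    have hsplit : ∀ p ∈ antidiagonal n,
        ((n + 1).choose p.1 : R) * abelPoly x p.1 * (y + (p.2 + 1 : ℕ)) ^ (p.2 + 1) =
          (n + 1).choose p.1 * (abelPoly x p.1 * abelPoly y (p.2 + 1)) +
            (n + 1) * (n.choose p.1 * abelPoly x p.1 * (y + 1 + p.2) ^ p.2) := by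
      intro p hp
      have hc : ((n + 1).choose p.1 : R) * (p.2 + 1) = (n + 1) * n.choose p.1 := by
        have h := Nat.choose_mul_succ_eq n p.1
        rw [show n + 1 - p.1 = p.2 + 1 by have := mem_antidiagonal.1 hp; omega] at h
        norm_cast
        rw [← h, mul_comm]
      rw [abelPoly_succ, pow_succ]
      push_cast
      linear_combination (abelPoly x p.1 * (y + 1 + p.2) ^ p.2) * hc
    rw [sum_antidiagonal_succ'] at hB ⊢
    rw [sum_congr rfl hsplit, sum_add_distrib, ← mul_sum, ← ih, ← add_assoc]
    simp only [Nat.choose_self, abelPoly_zero, abelPoly_succ] at hB ⊢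
    push_cast at hB ⊢
    linear_combination hB

end Abel

lemma abelPoly_eq_mul_zpow {K : Type*} [Field K] {x : K} (hx : x ≠ 0) (k : ℕ) :
    abelPoly x k = x * (x + k) ^ ((k : ℤ) - 1) := by
  cases k with
  | zero => simp [hx]
  | succ k =>
    push_cast
    rw [abelPoly_succ, add_sub_cancel_right, zpow_natCast, add_assoc]

lemma T_nonneg (m : ℕ) {n s : ℕ} (hs : s < n) : 0 ≤ T m n s := by
  have hn : (0 : ℝ) < n - s := sub_pos.2 (Nat.cast_lt.2 hs)
  unfold T
  positivity

lemma sub_mul_T {k n s : ℕ} (hs : s ≤ k) (hk : k < n) :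
    ((n : ℝ) - k) * T (k + 1) n s =
      k.choose s * abelPoly 1 s * abelPoly ((n : ℝ) - k) (k - s) := by
  obtain ⟨j, rfl⟩ := Nat.exists_eq_add_of_le hs
  have hz : (n : ℝ) - (s + j : ℕ) ≠ 0 := (sub_pos.2 (Nat.cast_lt.2 hk)).ne'
  rw [abelPoly_eq_mul_zpow one_ne_zero, abelPoly_eq_mul_zpow hz, T, Nat.add_sub_cancel_left,
    Nat.add_sub_cancel]
  have e₁ : ((s + j + 1 : ℕ) : ℤ) - s - 2 = (j : ℤ) - 1 := by push_cast; ring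
  have e₂ : (n : ℝ) - (s + j : ℕ) + j = n - s := by push_cast; ring
  rw [e₁, e₂, add_comm (1 : ℝ)]
  ring

lemma sum_range_mul_T {k n : ℕ} (hk : k < n) :
    ((n : ℝ) - k) * (n + 1) * ∑ s ∈ range (k + 1), s * T (k + 1) n s = k * (n + 1) ^ k := by
  cases k with
  | zero => simp
  | succ k =>
  set z : ℝ := n - (k + 1 : ℕ)
  have h : z * ∑ s ∈ range (k + 1 + 1), s * T (k + 1 + 1) n s = (k + 1) * (n + 1) ^ k := by
    calc z * ∑ s ∈ range (k + 1 + 1), s * T (k + 1 + 1) n s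
        = ∑ p ∈ antidiagonal (k + 1),
            (p.1 : ℝ) * ((k + 1).choose p.1 * abelPoly 1 p.1 * abelPoly z p.2) := by
          rw [sum_antidiagonal_eq_sum_range_succ
            (fun i j => (i : ℝ) * ((k + 1).choose i * abelPoly 1 i * abelPoly z j)), mul_sum]
          refine sum_congr rfl fun s hs => ?_
          rw [← sub_mul_T (Nat.lt_succ_iff.1 (mem_range.1 hs)) hk]
          ring
      _ = (k + 1) * ∑ p ∈ antidiagonal k, k.choose p.1 * ((2 + p.1) ^ p.1 * abelPoly z p.2) := by
          rw [sum_antidiagonal_succ, mul_sum]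
          simp only [CharP.cast_eq_zero, zero_mul, zero_add, abelPoly_succ]
          refine sum_congr rfl fun p _ => ?_
          have hc : ((k + 1).choose (p.1 + 1) : ℝ) * (p.1 + 1) = (k + 1) * k.choose p.1 := by
            exact_mod_cast (Nat.add_one_mul_choose_eq k p.1).symm
          push_cast
          linear_combination ((2 + p.1) ^ p.1 * abelPoly z p.2) * hc
      _ = (k + 1) * ∑ p ∈ antidiagonal k, k.choose p.1 * abelPoly z p.1 * (2 + p.2) ^ p.2 := by
          rw [← sum_antidiagonal_swap]
          simp only [Prod.fst_swap, Prod.snd_swap]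
          rw [sum_antidiagonal_choose_snd_mul]
          exact congrArg _ (sum_congr rfl fun p _ => by ring)
      _ = (k + 1) * (n + 1) ^ k := by
          rw [← abel_identity]
          congr 2
          simp only [z]
          push_cast
          ring
  push_cast
  linear_combination (n + 1 : ℝ) * h

lemma sum_Icc_sum_Icc_eq_sum_nsmul {M : Type*} [AddCommMonoid M] {k n : ℕ} (hk : k ≤ n)
    (f : ℕ → M) : ∑ j ∈ Icc 1 n, ∑ s ∈ Icc j k, f s = ∑ s ∈ range (k + 1), s • f s := by
  rw [sum_comm' (t' := range (k + 1)) (s' := fun s => Icc 1 s)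
    fun j s => by simp only [mem_Icc, mem_range]; omega]
  exact sum_congr rfl fun s _ => by rw [sum_const, Nat.card_Icc, Nat.add_sub_cancel]

lemma sum_Icc_sum_Icc_sub_eq_sum_nsmul {M : Type*} [AddCommMonoid M] {k n : ℕ} (hk : k ≤ n)
    (f : ℕ → M) :
    ∑ j ∈ Icc 1 n, ∑ s ∈ Icc (n - j + 1) k, f s = ∑ s ∈ range (k + 1), s • f s := by
  rw [sum_comm' (t' := range (k + 1)) (s' := fun s => Icc (n - s + 1) n)
    fun j s => by simp only [mem_Icc, mem_range]; omega]
  refine sum_congr rfl fun s hs => ?_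
  rw [sum_const, Nat.card_Icc, show n + 1 - (n - s + 1) = s by have := mem_range.1 hs; omega]

lemma sum_Q_eq_one {m n : ℕ} (hm : 1 ≤ m) (hmn : m ≤ n) (p : ℝ) :
    ∑ j ∈ Icc 1 n, Q m n p j = 1 := by
  obtain ⟨k, rfl⟩ := Nat.exists_eq_add_of_le' hm
  have hk : k < n := by omega
  have hW := sum_range_mul_T hk
  simp only [Q, sum_sub_distrib, ← mul_sum, sum_add_distrib, sum_const, Nat.card_Icc,
    Nat.add_sub_cancel, sum_Icc_sum_Icc_eq_sum_nsmul hk.le,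
    sum_Icc_sum_Icc_sub_eq_sum_nsmul hk.le, nsmul_eq_mul]
  have hz : (n : ℝ) - k ≠ 0 := (sub_pos.2 (Nat.cast_lt.2 hk)).ne'
  rw [Nat.cast_succ, show (n : ℝ) - (k + 1) + 1 = n - k by ring]
  field_simp
  linear_combination -hW

lemma Q_le {m n : ℕ} (hm : 1 ≤ m) (hmn : m ≤ n) {p : ℝ} (hp0 : 0 ≤ p) (hp1 : p ≤ 1) (j : ℕ) :
    Q m n p j ≤ ((n : ℝ) - m + 2) / (((n : ℝ) - m + 1) * ((n : ℝ) + 1)) := by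
  have hT (a : ℕ) : 0 ≤ ∑ s ∈ Icc a (m - 1), T m n s :=
    sum_nonneg fun s hs => T_nonneg m (by have := (mem_Icc.1 hs).2; omega)
  rw [Q, sub_le_self_iff]
  exact mul_nonneg (by positivity)
    (add_nonneg (mul_nonneg hp0 (hT _)) (mul_nonneg (sub_nonneg.2 hp1) (hT _)))

lemma sum_abs_sub_le_of_sum_eq {R ι : Type*} [Field R] [LinearOrder R] [IsStrictOrderedRing R]
    {s : Finset ι} {f g : ι → R} {c : R}
    (hsum : ∑ i ∈ s, f i = ∑ i ∈ s, g i) (hc : 0 ≤ c) (hle : ∀ i ∈ s, f i ≤ g i + c) :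
    ∑ i ∈ s, |f i - g i| ≤ 2 * (#s * c) :=
  calc ∑ i ∈ s, |f i - g i|
      ≤ ∑ i ∈ s, (2 * c - (f i - g i)) :=
        sum_le_sum fun i hi => abs_le'.2 ⟨by linarith [hle i hi], by linarith⟩
    _ = 2 * (#s * c) := by
        rw [sum_sub_distrib, sum_sub_distrib, hsum, sub_self, sub_zero, sum_const, nsmul_eq_mul]
        ring

/-- Upper bound on the total variation distance: for `1 ≤ m ≤ n` and `p ∈ [0,1]`,
`‖Q_{m,n,p} − Uni_n‖_TV ≤ (m−1)/((n+1)(n−m+1))`. -/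
theorem tv_upper_bound (m n : ℕ) (hm : 1 ≤ m) (hmn : m ≤ n)
    (p : ℝ) (hp0 : 0 ≤ p) (hp1 : p ≤ 1) :
    tvUni m n p ≤ ((m : ℝ) - 1) / (((n : ℝ) + 1) * ((n : ℝ) - m + 1)) := by
  have hn : (0 : ℝ) < n := Nat.cast_pos.2 (by omega)
  have hnm : (0 : ℝ) < n - m + 1 := by linarith [(Nat.cast_le (α := ℝ)).2 hmn]
  have hm₁ : (0 : ℝ) ≤ m - 1 := sub_nonneg.2 (Nat.one_le_cast.2 hm)
  set c : ℝ := (m - 1) / (n * (n + 1) * (n - m + 1)) with hc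
  have hsum : ∑ j ∈ Icc 1 n, Q m n p j = ∑ j ∈ Icc 1 n, 1 / (n : ℝ) := by
    rw [sum_Q_eq_one hm hmn, sum_const, Nat.card_Icc, Nat.add_sub_cancel, nsmul_eq_mul]
    field_simp
  have hle (j : ℕ) (_ : j ∈ Icc 1 n) : Q m n p j ≤ 1 / n + c := by
    convert Q_le hm hmn hp0 hp1 j using 1
    rw [hc]
    field_simp
    ring
  calc tvUni m n p ≤ 1 / 2 * (2 * (#(Icc 1 n) * c)) :=
        mul_le_mul_of_nonneg_left (sum_abs_sub_le_of_sum_eq hsum (by positivity) hle) (by norm_num)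
    _ = ((m : ℝ) - 1) / (((n : ℝ) + 1) * ((n : ℝ) - m + 1)) := by
        rw [Nat.card_Icc, Nat.add_sub_cancel, hc]
        field_simp
end
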